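/- If α and β are permutations of a finite set of cardinality m such that the subgroup generated by α and β acts transitively, then |α| + |β| + |(αβ)⁻¹| ≤ m + 2. -/

import Mathlib

/-!
Let `c σ` be the number of cycles of `σ` and `k α β` the number of orbits of `⟨α, β⟩`, i.e. of
classes of the join of the `SameCycle` partitions of `α` and `β`. Multiplying a permutation by a
transposition `(x y)` changes `c` by exactly one: it splits the cycle through `x` and `y` if they
share one and joins their cycles otherwise; the parity of `c` is fixed by the sign.

We prove `c α + c β + c (α * β) ≤ |X| + 2 k α β` by induction on `|X| - c β`. If `β ≠ 1`, pick
`x` moved by `β`; then `β' = β * (x βx)` has one cycle more than `β`, and `α * β = α * β' * (x βx)`.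
If `x` and `βx` share a cycle of `α * β'`, then `c (α * β) = c (α * β') + 1`, but `x` and `βx` are
already in one orbit of `⟨α, β'⟩`, so `k α β ≥ k α β'`. Otherwise `c (α * β) = c (α * β') - 1`
and `k α β ≥ k α β' - 1`. In both cases the bound for `(α, β')` gives the one for `(α, β)`.
Transitivity means `k α β = 1`.
-/

/-- The number of cycles of a permutation `σ` on a finite set, fixed points
included as trivial cycles (= number of orbits of the group generated by `σ`). -/
def cycleCount {X : Type*} [Fintype X] [DecidableEq X] (σ : Equiv.Perm X) : ℕ :=
  (Fintype.card X - σ.cycleType.sum) + σ.cycleType.card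

open Equiv Equiv.Perm Finset

namespace Setoid

variable {α : Type*} {s t : Setoid α}

theorem map_of_le_surjective (h : s ≤ t) : Function.Surjective (map_of_le h) :=
  fun q => q.inductionOn fun a => ⟨Quotient.mk s a, rfl⟩

theorem rel_apply_of_mem_closure {S : Set (Perm α)}
    (hS : ∀ σ ∈ S, ∀ a, s a (σ a)) {g : Perm α} (hg : g ∈ Subgroup.closure S) (a : α) :
    s a (g a) := by
  induction hg using Subgroup.closure_induction generalizing a with
  | mem σ hσ => exact hS σ hσ a
  | one => exact s.refl' a
  | mul g h _ _ hg hh => exact s.trans' (hh a) (hg (h a))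
  | inv g _ hg => simpa using s.symm' (hg (g⁻¹ a))

variable [Finite α]

theorem card_quotient_le_of_le (h : s ≤ t) : Nat.card (Quotient t) ≤ Nat.card (Quotient s) :=
  Nat.card_le_card_of_surjective _ (map_of_le_surjective h)

theorem card_quotient_lt_of_le (h : s ≤ t) {x y : α} (ht : t x y) (hs : ¬ s x y) :
    Nat.card (Quotient t) < Nat.card (Quotient s) := by
  classical
  have := Fintype.ofFinite α
  simp only [Nat.card_eq_fintype_card]
  exact Fintype.card_lt_of_surjective_not_injective _ (map_of_le_surjective h)
    fun hinj => hs (Quotient.exact (hinj (Quotient.sound ht)))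

end Setoid

namespace Equiv.Perm

variable {α : Type*}

theorem SameCycle.setoid_le {f : Perm α} {s : Setoid α} (h : ∀ a, s a (f a)) :
    SameCycle.setoid f ≤ s := by
  rintro a _ ⟨k, rfl⟩
  induction k using Int.induction_on with
  | zero => exact s.refl' a
  | succ k ih => rw [add_comm, zpow_add, zpow_one, mul_apply]; exact s.trans' ih (h _)
  | pred k ih =>
    rw [sub_eq_neg_add, zpow_add, zpow_neg_one, mul_apply]
    exact s.trans' ih (s.symm' (by simpa using h (f⁻¹ ((f ^ (-(k : ℤ))) a))))

theorem sameCycle_self_apply (f : Perm α) (a : α) : f.SameCycle a (f a) :=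
  sameCycle_apply_right.2 (SameCycle.refl f a)

theorem SameCycle.setoid_mul_le (σ ρ : Perm α) :
    SameCycle.setoid (σ * ρ) ≤ SameCycle.setoid σ ⊔ SameCycle.setoid ρ :=
  SameCycle.setoid_le fun a =>
    (SameCycle.setoid σ ⊔ SameCycle.setoid ρ).trans'
      (le_sup_right (a := SameCycle.setoid σ) (sameCycle_self_apply ρ a))
      (le_sup_left (b := SameCycle.setoid ρ) (sameCycle_self_apply σ (ρ a)))

variable [DecidableEq α]

theorem SameCycle.setoid_swap_le {s : Setoid α} {x y : α} (h : s x y) :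
    SameCycle.setoid (swap x y) ≤ s :=
  SameCycle.setoid_le fun a => by
    rw [swap_apply_def]
    split_ifs with hx hy
    · exact hx ▸ h
    · exact hy ▸ s.symm' h
    · exact s.refl' a

theorem SameCycle.setoid_le_mul_swap_sup (σ : Perm α) (x y : α) :
    SameCycle.setoid σ ≤ SameCycle.setoid (σ * swap x y) ⊔ SameCycle.setoid (swap x y) := by
  simpa using SameCycle.setoid_mul_le (σ * swap x y) (swap x y)

theorem card_quotient_le_card_quotient_sup_swap_add_one [Finite α] (s : Setoid α) (x y : α) :
    Nat.card (Quotient s) ≤ Nat.card (Quotient (s ⊔ SameCycle.setoid (swap x y))) + 1 := by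
  classical
  have := Fintype.ofFinite α
  -- `g` moves the class of `y` onto that of `x`; its kernel contains the join of `s` with `(x y)`.
  let g : α → Quotient s := fun a => if s a y then Quotient.mk s x else Quotient.mk s a
  have hg : s ⊔ SameCycle.setoid (swap x y) ≤ Setoid.ker g := by
    refine sup_le (fun a b hab => ?_) (SameCycle.setoid_swap_le ?_)
    · have hy : s a y ↔ s b y := ⟨s.trans' (s.symm' hab), s.trans' hab⟩
      simp only [Setoid.ker_def, g, hy, Quotient.sound hab]
    · simp [Setoid.ker_def, g]
  have hinj : Set.InjOn (Setoid.map_of_le (le_sup_left : s ≤ s ⊔ SameCycle.setoid (swap x y)))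
      {Quotient.mk s y}ᶜ := by
    intro p hp q hq hpq
    induction p using Quotient.inductionOn with | h a => ?_
    induction q using Quotient.inductionOn with | h b => ?_
    have hay : ¬ s a y := fun h => hp (Quotient.sound h)
    have hby : ¬ s b y := fun h => hq (Quotient.sound h)
    simpa [Setoid.ker_def, g, hay, hby] using hg (Quotient.exact hpq)
  have := card_le_card_of_injOn _ (s := univ.erase (Quotient.mk s y)) (t := univ)
    (by simp) (by simpa [Set.compl_eq_univ_sdiff] using hinj)
  simp only [Nat.card_eq_fintype_card, card_erase_of_mem (mem_univ _), card_univ] at this ⊢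
  omega

end Equiv.Perm

section CycleCount

variable {X : Type*} [Fintype X] [DecidableEq X]

theorem cycleCount_inv (σ : Perm X) : cycleCount σ⁻¹ = cycleCount σ := by
  rw [cycleCount, cycleCount, cycleType_inv]

theorem cycleCount_eq_card_quotient (σ : Perm X) :
    cycleCount σ = Nat.card (Quotient (SameCycle.setoid σ)) := by
  let f : X → X ⊕ Perm X := fun a => if σ a = a then .inl a else .inr (σ.cycleOf a)
  have hker : Setoid.ker f = SameCycle.setoid σ := by
    ext a b
    change f a = f b ↔ σ.SameCycle a b
    by_cases ha : σ a = a <;> by_cases hb : σ b = b <;> simp only [f, ha, hb, if_true, if_false,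
      Sum.inl.injEq, Sum.inr.injEq, reduceCtorEq, false_iff]
    · exact ⟨fun h => h ▸ SameCycle.refl σ a, fun h => h.eq_of_left ha⟩
    · exact fun h => hb (h.apply_eq_self_iff.1 ha)
    · exact fun h => ha (h.apply_eq_self_iff.2 hb)
    · exact (sameCycle_iff_cycleOf_eq_of_mem_support (mem_support.2 ha) (mem_support.2 hb)).symm
  have hl : ∀ a b, f a = .inl b ↔ σ a = a ∧ a = b := by
    intro a b; by_cases h : σ a = a <;> simp [f, h]
  have hr : ∀ a c, f a = .inr c ↔ σ a ≠ a ∧ σ.cycleOf a = c := by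
    intro a c; by_cases h : σ a = a <;> simp [f, h]
  have himage : univ.image f = ({a | σ a = a} : Finset X).disjSum σ.cycleFactorsFinset := by
    ext (a | c)
    · simp [hl]
    · simp only [mem_image, mem_univ, true_and, hr, inr_mem_disjSum]
      refine ⟨fun ⟨a, ha, hc⟩ => hc ▸ cycleOf_mem_cycleFactorsFinset_iff.2 (mem_support.2 ha),
        fun hc => ?_⟩
      obtain ⟨a, ha⟩ := (mem_cycleFactorsFinset_iff.1 hc).1.nonempty_support
      exact ⟨a, mem_support.1 (mem_cycleFactorsFinset_support_le hc ha),
        (cycle_is_cycleOf ha hc).symm⟩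
  rw [cycleCount, ← card_fixedPoints, cycleType_def, Multiset.card_map, ← hker,
    Nat.card_congr (Setoid.quotientKerEquivRange f), Nat.card_eq_card_toFinset, Set.toFinset_range,
    himage, card_disjSum]
  exact congrArg (· + _) (Fintype.card_subtype _)

theorem cycleCount_le_card (σ : Perm X) : cycleCount σ ≤ Fintype.card X := by
  rw [cycleCount_eq_card_quotient, ← Nat.card_eq_fintype_card]
  exact Nat.card_le_card_of_surjective _ Quotient.mk_surjective

theorem sign_eq_neg_one_pow_card_sub_cycleCount (σ : Perm X) :
    sign σ = (-1) ^ (Fintype.card X - cycleCount σ) := by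
  have hsum := σ.sum_cycleType_le
  have hcard : σ.cycleType.card • 2 ≤ σ.cycleType.sum :=
    Multiset.card_nsmul_le_sum fun _ => two_le_of_mem_cycleType
  rw [sign_of_cycleType, cycleCount, smul_eq_mul] at *
  rw [show σ.cycleType.sum + σ.cycleType.card =
      (Fintype.card X - (Fintype.card X - σ.cycleType.sum + σ.cycleType.card)) +
        2 * σ.cycleType.card by omega, pow_add, pow_mul, Int.units_sq, one_pow, mul_one]

theorem cycleCount_mul_swap_ne (σ : Perm X) {x y : X} (hxy : x ≠ y) :
    cycleCount (σ * swap x y) ≠ cycleCount σ := by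
  intro h
  have := sign_mul σ (swap x y)
  rw [sign_swap hxy, sign_eq_neg_one_pow_card_sub_cycleCount,
    sign_eq_neg_one_pow_card_sub_cycleCount, h, mul_neg_one] at this
  exact units_ne_neg_self _ this

theorem cycleCount_mul_swap_le (σ : Perm X) (x y : X) :
    cycleCount (σ * swap x y) ≤ cycleCount σ + 1 := by
  simp only [cycleCount_eq_card_quotient]
  grw [card_quotient_le_card_quotient_sup_swap_add_one (SameCycle.setoid (σ * swap x y)) x y,
    Setoid.card_quotient_le_of_le (SameCycle.setoid_le_mul_swap_sup σ x y)]

theorem cycleCount_le_cycleCount_mul_swap {σ : Perm X} {x y : X} (h : σ.SameCycle x y) :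
    cycleCount σ ≤ cycleCount (σ * swap x y) := by
  simp only [cycleCount_eq_card_quotient]
  exact Setoid.card_quotient_le_of_le
    ((SameCycle.setoid_mul_le σ _).trans (sup_le le_rfl (SameCycle.setoid_swap_le h)))

theorem cycleCount_mul_swap_of_sameCycle {σ : Perm X} {x y : X} (hxy : x ≠ y)
    (h : σ.SameCycle x y) : cycleCount (σ * swap x y) = cycleCount σ + 1 := by
  have := cycleCount_mul_swap_le σ x y
  have := cycleCount_le_cycleCount_mul_swap h
  have := cycleCount_mul_swap_ne σ hxy
  omega

theorem cycleCount_mul_swap_of_not_sameCycle {σ : Perm X} {x y : X} (h : ¬ σ.SameCycle x y) :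
    cycleCount (σ * swap x y) + 1 = cycleCount σ := by
  have hxy : x ≠ y := fun e => h (e ▸ SameCycle.refl σ x)
  by_cases h' : (σ * swap x y).SameCycle x y
  · simpa using (cycleCount_mul_swap_of_sameCycle hxy h').symm
  -- Otherwise `σ` and `σ * swap x y` both separate `x` and `y`, so each has exactly one class more
  -- than their common join with `swap x y`; this contradicts the parity of `cycleCount`.
  exfalso
  have hswap : SameCycle.setoid (swap x y) x y := ⟨1, by simp⟩
  have hjoin : SameCycle.setoid σ ⊔ SameCycle.setoid (swap x y) =
      SameCycle.setoid (σ * swap x y) ⊔ SameCycle.setoid (swap x y) :=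
    le_antisymm (sup_le (SameCycle.setoid_le_mul_swap_sup σ x y) le_sup_right)
      (sup_le (SameCycle.setoid_mul_le σ _) le_sup_right)
  have h₁ := Setoid.card_quotient_lt_of_le le_sup_left
    ((le_sup_right : _ ≤ SameCycle.setoid σ ⊔ _) hswap) h
  have h₂ := Setoid.card_quotient_lt_of_le le_sup_left
    ((le_sup_right : _ ≤ SameCycle.setoid (σ * swap x y) ⊔ _) hswap) h'
  have h₃ := card_quotient_le_card_quotient_sup_swap_add_one (SameCycle.setoid σ) x y
  have h₄ :=
    card_quotient_le_card_quotient_sup_swap_add_one (SameCycle.setoid (σ * swap x y)) x y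
  rw [← hjoin] at h₂ h₄
  have := cycleCount_mul_swap_ne σ hxy
  simp only [cycleCount_eq_card_quotient] at this
  omega

theorem cycleCount_add_cycleCount_add_cycleCount_mul_le (α β : Perm X) :
    cycleCount α + cycleCount β + cycleCount (α * β) ≤
      Fintype.card X + 2 * Nat.card (Quotient (SameCycle.setoid α ⊔ SameCycle.setoid β)) := by
  by_cases hβ : β = 1
  · subst hβ
    rw [sup_eq_left.2 (SameCycle.setoid_le fun a => Setoid.refl' _ a),
      ← cycleCount_eq_card_quotient, mul_one]
    have := cycleCount_le_card (1 : Perm X)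
    omega
  obtain ⟨x, hx⟩ : ∃ x, β x ≠ x := not_forall.1 fun h => hβ (Perm.ext h)
  set τ := swap x (β x)
  have hxβx : x ≠ β x := Ne.symm hx
  have hβτ : cycleCount (β * τ) = cycleCount β + 1 :=
    cycleCount_mul_swap_of_sameCycle hxβx (sameCycle_self_apply β x)
  have ih := cycleCount_add_cycleCount_add_cycleCount_mul_le α (β * τ)
  have hαβ : α * β = α * (β * τ) * τ := by rw [← mul_assoc, mul_swap_mul_self]
  have hjoin : SameCycle.setoid α ⊔ SameCycle.setoid β ≤
      SameCycle.setoid α ⊔ SameCycle.setoid (β * τ) ⊔ SameCycle.setoid τ := by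
    refine sup_le (le_sup_left.trans le_sup_left) ?_
    exact (SameCycle.setoid_le_mul_swap_sup β x (β x)).trans (sup_le_sup_right le_sup_right _)
  by_cases hA : (α * (β * τ)).SameCycle x (β x)
  · have h₁ : cycleCount (α * β) = cycleCount (α * (β * τ)) + 1 :=
      hαβ ▸ cycleCount_mul_swap_of_sameCycle hxβx hA
    have h₂ := Setoid.card_quotient_le_of_le (hjoin.trans
      (sup_le le_rfl (SameCycle.setoid_swap_le (SameCycle.setoid_mul_le α (β * τ) hA))))
    omega
  · have h₁ : cycleCount (α * β) + 1 = cycleCount (α * (β * τ)) :=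
      hαβ ▸ cycleCount_mul_swap_of_not_sameCycle hA
    have h₂ := (card_quotient_le_card_quotient_sup_swap_add_one
      (SameCycle.setoid α ⊔ SameCycle.setoid (β * τ)) x (β x)).trans
        (Nat.add_le_add_right (Setoid.card_quotient_le_of_le hjoin) 1)
    omega
termination_by Fintype.card X - cycleCount β
decreasing_by
  simp only [τ] at hβτ
  have := cycleCount_le_card (β * swap x (β x))
  omega

end CycleCount

/-- If ⟨α, β⟩ acts transitively on a set of cardinality m, then
|α| + |β| + |(αβ)⁻¹| ≤ m + 2. -/
theorem cycleCount_sum_le {X : Type*} [Fintype X] [DecidableEq X]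
    (m : ℕ) (hm : Fintype.card X = m) (α β : Equiv.Perm X)
    (htrans : ∀ x y : X, ∃ g ∈ Subgroup.closure {α, β}, g x = y) :
    cycleCount α + cycleCount β + cycleCount ((α * β)⁻¹) ≤ m + 2 := by
  subst hm
  have hconn : Nat.card (Quotient (SameCycle.setoid α ⊔ SameCycle.setoid β)) ≤ 1 := by
    refine Finite.card_le_one_iff_subsingleton.2
      ⟨fun p q => Quotient.inductionOn₂ p q fun a b => Quotient.sound ?_⟩
    obtain ⟨g, hg, rfl⟩ := htrans a b
    refine Setoid.rel_apply_of_mem_closure ?_ hg a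
    rintro σ (rfl | rfl) c
    · exact (le_sup_left : _ ≤ _ ⊔ SameCycle.setoid β) (sameCycle_self_apply σ c)
    · exact (le_sup_right : _ ≤ SameCycle.setoid α ⊔ _) (sameCycle_self_apply σ c)
  have := cycleCount_add_cycleCount_add_cycleCount_mul_le α β
  rw [cycleCount_inv]
  omega
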